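/- Let A = (V, μ, η, α) be a unital hom-associative algebra over a field K with unit e₂ = η(1) satisfying α(e₂) = e₂, and suppose W is a linear complement of K·e₂ in V (so V = K·e₂ ⊕ W) with α(W) ⊆ W and μ(w, w') ∈ W for all w, w' ∈ W. Form Ṽ = K·e₁ ⊕ V (adjoining a new element e₁) and define: μ₂(e₁, u) = μ₂(u, e₁) = u for all u ∈ Ṽ and μ₂(x, y) = μ(x, y) for x, y ∈ V; η₂(1) = e₁; Δ₂(e₁) = e₁⊗e₁, Δ₂(e₂) = e₂⊗e₁ + e₁⊗e₂ − e₂⊗e₂, and Δ₂(w) = (e₁ − e₂)⊗α(w) + α(w)⊗(e₁ − e₂) for w ∈ W; ε₂(e₁) = 1 and ε₂(x) = 0 for x ∈ V; α₂(e₁) = e₁, α₂(e₂) = e₂, and α₂(x) = α(x) for x ∈ V (all extended linearly). Then: (a) (α₂⊗α₂)∘Δ₂ = Δ₂∘α₂; (b) (α₂⊗Δ₂)∘Δ₂ = (Δ₂⊗α₂)∘Δ₂; (c) (ε₂⊗α₂)(Δ₂(u)) = (α₂⊗ε₂)(Δ₂(u)) = α₂(α₂(u)) for all u ∈ Ṽ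 (identifying K⊗Ṽ and Ṽ⊗K with Ṽ); (d) Δ₂(μ₂(u,v)) = Δ₂(u)•Δ₂(v) for all u, v ∈ Ṽ, where (a⊗b)•(c⊗d) = μ₂(a,c)⊗μ₂(b,d); (e) ε₂(μ₂(u,v)) = ε₂(u)ε₂(v) for all u, v ∈ Ṽ; and (f) ε₂∘α₂ = ε₂. In particular, K₂(A) = (Ṽ, μ₂, η₂, Δ₂, ε₂, α₂) carries the second Kaplansky hom-bialgebra structure. -/

import Mathlib

/-!
Put `d = e₁ - e₂ ∈ Ṽ`. In terms of `d` the comultiplication reads `Δ₂(e₁) = e₁ ⊗ e₁`,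
`Δ₂(d) = d ⊗ d` and `Δ₂(w) = d ⊗ α(w) + α(w) ⊗ d` for `w ∈ W`: both `e₁` and `d` are grouplike.
Moreover `α₂(d) = d`, `ε₂(d) = 1`, and `d` is an idempotent of `μ₂` that kills `V` on both sides,
because `e₂` is the unit of `μ`. Since `Ṽ` is spanned by `e₁`, `d` and `W`, every identity is
checked on these generators, where it follows from these rules (and, for the product of two
elements of `W`, from the multiplicativity of `α`).
-/

open TensorProduct

namespace Stmt5

variable {K V : Type*} [Field K] [AddCommGroup V] [Module K V]

/-- The extended space `Ṽ = K·e₁ ⊕ V`, realized as `K × V`, with `e₁ = (1,0)`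
and `V` embedded via `x ↦ (0,x)`. -/
abbrev Vt (K V : Type*) := K × V

/-- The embedding `V → Ṽ`. -/
def iota : V →ₗ[K] Vt K V := LinearMap.inr K K V

/-- The adjoined unit `e₁ ∈ Ṽ`. -/
def e₁ : Vt K V := (1, 0)

/-- The Kaplansky multiplication `μ₂` on `Ṽ`: `e₁` is a two-sided unit and
`μ₂` restricts to `μ` on `V`. -/
def mu₂ (μ : V →ₗ[K] V →ₗ[K] V) : Vt K V →ₗ[K] Vt K V →ₗ[K] Vt K V :=
  LinearMap.mk₂ K
    (fun p q => (p.1 * q.1, p.1 • q.2 + q.1 • p.2 + μ p.2 q.2))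
    (by intro p p' q; ext <;>
      simp [add_mul, add_smul, smul_add, map_add] <;> abel)
    (by intro c p q; ext <;>
      simp [mul_assoc, mul_smul, smul_add, smul_comm q.1 c, map_smul])
    (by intro p q q'; ext <;>
      simp [mul_add, add_smul, smul_add, map_add] <;> abel)
    (by intro c p q; ext <;>
      simp [mul_left_comm, mul_smul, smul_add, smul_comm p.1 c, map_smul])

/-- The twisting map `α₂` on `Ṽ`: `α₂(e₁) = e₁`, `α₂ = α` on `V`
(so in particular `α₂(e₂) = e₂` when `α(e₂) = e₂`). -/
def alpha₂ (α : V →ₗ[K] V) : Vt K V →ₗ[K] Vt K V := LinearMap.prodMap LinearMap.id α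

/-- The counit `ε₂` on `Ṽ`: `ε₂(e₁) = 1`, `ε₂ = 0` on `V`. -/
def eps₂ : Vt K V →ₗ[K] K := LinearMap.fst K K V

/-- The multiplication `•` on `Ṽ ⊗ Ṽ` induced by `μ₂`:
`(a⊗b)•(c⊗d) = μ₂(a,c) ⊗ μ₂(b,d)`. -/
noncomputable def bullet (μ : V →ₗ[K] V →ₗ[K] V) :
    (Vt K V ⊗[K] Vt K V) →ₗ[K] (Vt K V ⊗[K] Vt K V) →ₗ[K] (Vt K V ⊗[K] Vt K V) :=
  TensorProduct.curry
    ((TensorProduct.map (TensorProduct.lift (mu₂ μ)) (TensorProduct.lift (mu₂ μ))).comp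
      (TensorProduct.tensorTensorTensorComm K (Vt K V) (Vt K V) (Vt K V) (Vt K V)).toLinearMap)

@[simp] lemma mu₂_e₁_left (μ : V →ₗ[K] V →ₗ[K] V) (u : Vt K V) : mu₂ μ e₁ u = u := by
  simp [mu₂, e₁]

@[simp] lemma mu₂_e₁_right (μ : V →ₗ[K] V →ₗ[K] V) (u : Vt K V) : mu₂ μ u e₁ = u := by
  simp [mu₂, e₁]

@[simp] lemma mu₂_iota_iota (μ : V →ₗ[K] V →ₗ[K] V) (x y : V) :
    mu₂ μ (iota x) (iota y) = iota (μ x y) := by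
  simp [mu₂, iota]

@[simp] lemma alpha₂_e₁ (α : V →ₗ[K] V) : alpha₂ α (e₁ : Vt K V) = e₁ := by
  simp [alpha₂, e₁]

@[simp] lemma alpha₂_iota (α : V →ₗ[K] V) (x : V) : alpha₂ α (iota x) = iota (α x) := by
  simp [alpha₂, iota]

@[simp] lemma eps₂_e₁ : eps₂ (e₁ : Vt K V) = 1 := rfl

@[simp] lemma eps₂_iota (x : V) : eps₂ (iota x : Vt K V) = 0 := rfl

lemma eps₂_mu₂ (μ : V →ₗ[K] V →ₗ[K] V) (u v : Vt K V) :
    eps₂ (mu₂ μ u v) = eps₂ u * eps₂ v := rfl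

lemma eps₂_alpha₂ (α : V →ₗ[K] V) (u : Vt K V) : eps₂ (alpha₂ α u) = eps₂ u := rfl

@[simp] lemma bullet_tmul (μ : V →ₗ[K] V →ₗ[K] V) (a b c d : Vt K V) :
    bullet μ (a ⊗ₜ[K] b) (c ⊗ₜ[K] d) = mu₂ μ a c ⊗ₜ[K] mu₂ μ b d := by
  simp [bullet]

def eDiff (e₂ : V) : Vt K V := e₁ - iota e₂

section eDiff

variable {μ : V →ₗ[K] V →ₗ[K] V} {α : V →ₗ[K] V} {e₂ : V}

lemma e₁_sub_eDiff : e₁ - eDiff e₂ = (iota e₂ : Vt K V) := sub_sub_cancel _ _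

@[simp] lemma eps₂_eDiff : eps₂ (eDiff e₂ : Vt K V) = 1 := by
  simp [eDiff]

lemma alpha₂_eDiff (hαe : α e₂ = e₂) : alpha₂ α (eDiff e₂) = eDiff e₂ := by
  simp [eDiff, hαe]

lemma mu₂_eDiff_iota (hunitl : ∀ x, μ e₂ x = x) (x : V) : mu₂ μ (eDiff e₂) (iota x) = 0 := by
  simp [eDiff, hunitl]

lemma mu₂_iota_eDiff (hunitr : ∀ x, μ x e₂ = x) (x : V) : mu₂ μ (iota x) (eDiff e₂) = 0 := by
  simp [eDiff, hunitr]

lemma mu₂_eDiff_self (hunitl : ∀ x, μ e₂ x = x) : mu₂ μ (eDiff e₂) (eDiff e₂) = eDiff e₂ := by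
  change mu₂ μ (eDiff e₂) (e₁ - iota e₂) = _
  rw [map_sub, mu₂_e₁_right, mu₂_eDiff_iota hunitl, sub_zero]

end eDiff

def generators (e₂ : V) (W : Submodule K V) : Set (Vt K V) :=
  {e₁, eDiff e₂} ∪ Set.range fun w : W => iota (w : V)

lemma linearMap_ext {X : Type*} [AddCommGroup X] [Module K X] {e₂ : V} {W : Submodule K V}
    (hcompl : IsCompl (K ∙ e₂) W) {F G : Vt K V →ₗ[K] X} (h : Set.EqOn F G (generators e₂ W)) :
    F = G := by
  have h₁ : F e₁ = G e₁ := h (by simp [generators])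
  have h₂ : F (iota e₂) = G (iota e₂) := by
    rw [← e₁_sub_eDiff, map_sub, map_sub, h₁, h (by simp [generators])]
  refine LinearMap.prod_ext (LinearMap.ext_ring h₁)
    (LinearMap.ext_on_codisjoint hcompl.codisjoint ?_ fun w hw => h (Or.inr ⟨⟨w, hw⟩, rfl⟩))
  intro x hx
  obtain ⟨a, rfl⟩ := Submodule.mem_span_singleton.1 hx
  change F (iota (a • e₂)) = G (iota (a • e₂))
  simp only [map_smul, h₂]

lemma linearMap_ext₂ {X : Type*} [AddCommGroup X] [Module K X] {e₂ : V} {W : Submodule K V}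
    (hcompl : IsCompl (K ∙ e₂) W) {B C : Vt K V →ₗ[K] Vt K V →ₗ[K] X}
    (h : ∀ u ∈ generators e₂ W, ∀ v ∈ generators e₂ W, B u v = C u v) : B = C :=
  linearMap_ext hcompl fun _ hu => linearMap_ext hcompl fun _ hv => h _ hu _ hv

structure IsKaplanskyComul (α : V →ₗ[K] V) (e₂ : V) (W : Submodule K V)
    (Δ₂ : Vt K V →ₗ[K] Vt K V ⊗[K] Vt K V) : Prop where
  apply_e₁ : Δ₂ e₁ = e₁ ⊗ₜ e₁
  apply_eDiff : Δ₂ (eDiff e₂) = eDiff e₂ ⊗ₜ eDiff e₂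
  apply_iota : ∀ w ∈ W, Δ₂ (iota w) = eDiff e₂ ⊗ₜ iota (α w) + iota (α w) ⊗ₜ eDiff e₂

namespace IsKaplanskyComul

variable {μ : V →ₗ[K] V →ₗ[K] V} {α : V →ₗ[K] V} {e₂ : V} {W : Submodule K V}
  {Δ₂ : Vt K V →ₗ[K] Vt K V ⊗[K] Vt K V}

lemma of_apply_iota_e₂ (hΔe₁ : Δ₂ e₁ = e₁ ⊗ₜ e₁)
    (hΔe₂ : Δ₂ (iota e₂) = iota e₂ ⊗ₜ e₁ + e₁ ⊗ₜ iota e₂ - iota e₂ ⊗ₜ iota e₂)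
    (hΔW : ∀ w ∈ W, Δ₂ (iota w) = eDiff e₂ ⊗ₜ iota (α w) + iota (α w) ⊗ₜ eDiff e₂) :
    IsKaplanskyComul α e₂ W Δ₂ := by
  refine ⟨hΔe₁, ?_, hΔW⟩
  simp only [eDiff, map_sub, hΔe₁, hΔe₂, tmul_sub, sub_tmul]
  abel

lemma map_alpha₂_comp (hΔ : IsKaplanskyComul α e₂ W Δ₂) (hcompl : IsCompl (K ∙ e₂) W)
    (hαe : α e₂ = e₂) (hαW : ∀ w ∈ W, α w ∈ W) :
    map (alpha₂ α) (alpha₂ α) ∘ₗ Δ₂ = Δ₂ ∘ₗ alpha₂ α := by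
  refine linearMap_ext hcompl ?_
  rintro _ ((rfl | rfl) | ⟨w, rfl⟩) <;>
    simp [hΔ.apply_e₁, hΔ.apply_eDiff, hΔ.apply_iota, hαW, alpha₂_eDiff hαe]

lemma hom_coassoc (hΔ : IsKaplanskyComul α e₂ W Δ₂) (hcompl : IsCompl (K ∙ e₂) W)
    (hαe : α e₂ = e₂) (hαW : ∀ w ∈ W, α w ∈ W) :
    map (alpha₂ α) Δ₂ ∘ₗ Δ₂
      = (TensorProduct.assoc K _ _ _).toLinearMap ∘ₗ map Δ₂ (alpha₂ α) ∘ₗ Δ₂ := by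
  refine linearMap_ext hcompl ?_
  rintro _ ((rfl | rfl) | ⟨w, rfl⟩)
  · simp [hΔ.apply_e₁]
  · simp [hΔ.apply_eDiff, alpha₂_eDiff hαe]
  · simp [hΔ.apply_iota, hαW, hΔ.apply_eDiff, alpha₂_eDiff hαe, tmul_add, add_tmul]
    abel

lemma lid_map_eps₂_comp (hΔ : IsKaplanskyComul α e₂ W Δ₂) (hcompl : IsCompl (K ∙ e₂) W)
    (hαe : α e₂ = e₂) :
    (TensorProduct.lid K _).toLinearMap ∘ₗ map eps₂ (alpha₂ α) ∘ₗ Δ₂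
      = alpha₂ α ∘ₗ alpha₂ α := by
  refine linearMap_ext hcompl ?_
  rintro _ ((rfl | rfl) | ⟨w, rfl⟩) <;>
    simp [hΔ.apply_e₁, hΔ.apply_eDiff, hΔ.apply_iota, alpha₂_eDiff hαe]

lemma rid_map_eps₂_comp (hΔ : IsKaplanskyComul α e₂ W Δ₂) (hcompl : IsCompl (K ∙ e₂) W)
    (hαe : α e₂ = e₂) :
    (TensorProduct.rid K _).toLinearMap ∘ₗ map (alpha₂ α) eps₂ ∘ₗ Δ₂
      = alpha₂ α ∘ₗ alpha₂ α := by
  refine linearMap_ext hcompl ?_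
  rintro _ ((rfl | rfl) | ⟨w, rfl⟩) <;>
    simp [hΔ.apply_e₁, hΔ.apply_eDiff, hΔ.apply_iota, alpha₂_eDiff hαe]

lemma compr₂_mu₂ (hΔ : IsKaplanskyComul α e₂ W Δ₂) (hcompl : IsCompl (K ∙ e₂) W)
    (hmult : ∀ x y, α (μ x y) = μ (α x) (α y))
    (hunitl : ∀ x, μ e₂ x = x) (hunitr : ∀ x, μ x e₂ = x)
    (hμW : ∀ w ∈ W, ∀ w' ∈ W, μ w w' ∈ W) :
    (mu₂ μ).compr₂ Δ₂ = (bullet μ).compl₁₂ Δ₂ Δ₂ := by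
  refine linearMap_ext₂ hcompl ?_
  rintro _ ((rfl | rfl) | ⟨w, rfl⟩) _ ((rfl | rfl) | ⟨w', rfl⟩) <;>
    simp [hΔ.apply_e₁, hΔ.apply_eDiff, hΔ.apply_iota, hμW, hmult, mu₂_eDiff_self hunitl,
      mu₂_eDiff_iota hunitl, mu₂_iota_eDiff hunitr]

end IsKaplanskyComul

theorem stmt_5_general (μ : V →ₗ[K] V →ₗ[K] V) (α : V →ₗ[K] V) (e₂ : V)
    (hmult : ∀ x y : V, α (μ x y) = μ (α x) (α y))
    (hunitl : ∀ x : V, μ e₂ x = x) (hunitr : ∀ x : V, μ x e₂ = x)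
    (hαe : α e₂ = e₂)
    (W : Submodule K V)
    (hcompl : IsCompl (Submodule.span K {e₂}) W)
    (hαW : ∀ w ∈ W, α w ∈ W)
    (hμW : ∀ w ∈ W, ∀ w' ∈ W, μ w w' ∈ W)
    (Δ₂ : Vt K V →ₗ[K] (Vt K V) ⊗[K] (Vt K V))
    (hΔe₁ : Δ₂ e₁ = (e₁ : Vt K V) ⊗ₜ[K] (e₁ : Vt K V))
    (hΔe₂ : Δ₂ (iota e₂) = (iota e₂ : Vt K V) ⊗ₜ[K] (e₁ : Vt K V)
        + (e₁ : Vt K V) ⊗ₜ[K] (iota e₂) - (iota e₂ : Vt K V) ⊗ₜ[K] (iota e₂))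
    (hΔW : ∀ w ∈ W, Δ₂ (iota w)
        = ((e₁ : Vt K V) - iota e₂) ⊗ₜ[K] (iota (α w))
          + (iota (α w) : Vt K V) ⊗ₜ[K] ((e₁ : Vt K V) - iota e₂)) :
    -- (a) (α₂ ⊗ α₂) ∘ Δ₂ = Δ₂ ∘ α₂
    (∀ u : Vt K V, TensorProduct.map (alpha₂ α) (alpha₂ α) (Δ₂ u) = Δ₂ (alpha₂ α u)) ∧
    -- (b) (α₂ ⊗ Δ₂) ∘ Δ₂ = (Δ₂ ⊗ α₂) ∘ Δ₂
    (∀ u : Vt K V, TensorProduct.map (alpha₂ α) Δ₂ (Δ₂ u)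
        = TensorProduct.assoc K (Vt K V) (Vt K V) (Vt K V)
            (TensorProduct.map Δ₂ (alpha₂ α) (Δ₂ u))) ∧
    -- (c) (ε₂ ⊗ α₂)(Δ₂ u) = (α₂ ⊗ ε₂)(Δ₂ u) = α₂(α₂ u)
    (∀ u : Vt K V, TensorProduct.lid K (Vt K V)
        (TensorProduct.map (eps₂ (K := K) (V := V)) (alpha₂ α) (Δ₂ u))
        = alpha₂ α (alpha₂ α u)) ∧
    (∀ u : Vt K V, TensorProduct.rid K (Vt K V)
        (TensorProduct.map (alpha₂ α) (eps₂ (K := K) (V := V)) (Δ₂ u))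
        = alpha₂ α (alpha₂ α u)) ∧
    -- (d) Δ₂(μ₂(u,v)) = Δ₂(u) • Δ₂(v)
    (∀ u v : Vt K V, Δ₂ (mu₂ μ u v) = bullet μ (Δ₂ u) (Δ₂ v)) ∧
    -- (e) ε₂(μ₂(u,v)) = ε₂(u)·ε₂(v)
    (∀ u v : Vt K V, eps₂ (mu₂ μ u v) = eps₂ u * eps₂ (K := K) (V := V) v) ∧
    -- (f) ε₂ ∘ α₂ = ε₂
    (∀ u : Vt K V, eps₂ (alpha₂ α u) = eps₂ (K := K) (V := V) u) := by
  have hΔ : IsKaplanskyComul α e₂ W Δ₂ := .of_apply_iota_e₂ hΔe₁ hΔe₂ hΔW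
  exact ⟨LinearMap.congr_fun (hΔ.map_alpha₂_comp hcompl hαe hαW),
    LinearMap.congr_fun (hΔ.hom_coassoc hcompl hαe hαW),
    LinearMap.congr_fun (hΔ.lid_map_eps₂_comp hcompl hαe),
    LinearMap.congr_fun (hΔ.rid_map_eps₂_comp hcompl hαe),
    LinearMap.congr_fun₂ (hΔ.compr₂_mu₂ hcompl hmult hunitl hunitr hμW),
    eps₂_mu₂ μ, eps₂_alpha₂ α⟩

/-- second Kaplansky construction. Let `(V, μ, e₂, α)` be a unital
hom-associative algebra with `α(e₂) = e₂`, and let `W` be a linear complement of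
`K·e₂` in `V` stable under `α` and under `μ`. Let `Δ₂ : Ṽ → Ṽ ⊗ Ṽ` be the linear
map determined by `Δ₂(e₁) = e₁⊗e₁`, `Δ₂(e₂) = e₂⊗e₁ + e₁⊗e₂ − e₂⊗e₂` and
`Δ₂(w) = (e₁−e₂)⊗α(w) + α(w)⊗(e₁−e₂)` for `w ∈ W`. With `μ₂`, `η₂(1) = e₁`, `ε₂`
and `α₂` as above, `K₂(A) = (Ṽ, μ₂, η₂, Δ₂, ε₂, α₂)` satisfies:
(a) comultiplicativity, (b) hom-coassociativity, (c) the hom-counital condition,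
(d) `Δ₂` is multiplicative for `μ₂` w.r.t. `•`, (e) `ε₂` is multiplicative, and
(f) `ε₂ ∘ α₂ = ε₂`; i.e. `K₂(A)` is a unital hom-bialgebra. -/
theorem stmt_5 (μ : V →ₗ[K] V →ₗ[K] V) (α : V →ₗ[K] V) (e₂ : V)
    (hmult : ∀ x y : V, α (μ x y) = μ (α x) (α y))
    (hassoc : ∀ x y z : V, μ (α x) (μ y z) = μ (μ x y) (α z))
    (hunitl : ∀ x : V, μ e₂ x = x) (hunitr : ∀ x : V, μ x e₂ = x)
    (hαe : α e₂ = e₂)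
    (W : Submodule K V)
    (hcompl : IsCompl (Submodule.span K {e₂}) W)
    (hαW : ∀ w ∈ W, α w ∈ W)
    (hμW : ∀ w ∈ W, ∀ w' ∈ W, μ w w' ∈ W)
    (Δ₂ : Vt K V →ₗ[K] (Vt K V) ⊗[K] (Vt K V))
    (hΔe₁ : Δ₂ e₁ = (e₁ : Vt K V) ⊗ₜ[K] (e₁ : Vt K V))
    (hΔe₂ : Δ₂ (iota e₂) = (iota e₂ : Vt K V) ⊗ₜ[K] (e₁ : Vt K V)
        + (e₁ : Vt K V) ⊗ₜ[K] (iota e₂) - (iota e₂ : Vt K V) ⊗ₜ[K] (iota e₂))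
    (hΔW : ∀ w ∈ W, Δ₂ (iota w)
        = ((e₁ : Vt K V) - iota e₂) ⊗ₜ[K] (iota (α w))
          + (iota (α w) : Vt K V) ⊗ₜ[K] ((e₁ : Vt K V) - iota e₂)) :
    -- (a) (α₂ ⊗ α₂) ∘ Δ₂ = Δ₂ ∘ α₂
    (∀ u : Vt K V, TensorProduct.map (alpha₂ α) (alpha₂ α) (Δ₂ u) = Δ₂ (alpha₂ α u)) ∧
    -- (b) (α₂ ⊗ Δ₂) ∘ Δ₂ = (Δ₂ ⊗ α₂) ∘ Δ₂
    (∀ u : Vt K V, TensorProduct.map (alpha₂ α) Δ₂ (Δ₂ u)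
        = TensorProduct.assoc K (Vt K V) (Vt K V) (Vt K V)
            (TensorProduct.map Δ₂ (alpha₂ α) (Δ₂ u))) ∧
    -- (c) (ε₂ ⊗ α₂)(Δ₂ u) = (α₂ ⊗ ε₂)(Δ₂ u) = α₂(α₂ u)
    (∀ u : Vt K V, TensorProduct.lid K (Vt K V)
        (TensorProduct.map (eps₂ (K := K) (V := V)) (alpha₂ α) (Δ₂ u))
        = alpha₂ α (alpha₂ α u)) ∧
    (∀ u : Vt K V, TensorProduct.rid K (Vt K V)
        (TensorProduct.map (alpha₂ α) (eps₂ (K := K) (V := V)) (Δ₂ u))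
        = alpha₂ α (alpha₂ α u)) ∧
    -- (d) Δ₂(μ₂(u,v)) = Δ₂(u) • Δ₂(v)
    (∀ u v : Vt K V, Δ₂ (mu₂ μ u v) = bullet μ (Δ₂ u) (Δ₂ v)) ∧
    -- (e) ε₂(μ₂(u,v)) = ε₂(u)·ε₂(v)
    (∀ u v : Vt K V, eps₂ (mu₂ μ u v) = eps₂ u * eps₂ (K := K) (V := V) v) ∧
    -- (f) ε₂ ∘ α₂ = ε₂
    (∀ u : Vt K V, eps₂ (alpha₂ α u) = eps₂ (K := K) (V := V) u) :=
  stmt_5_general μ α e₂ hmult hunitl hunitr hαe W hcompl hαW hμW Δ₂ hΔe₁ hΔe₂ hΔW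

end Stmt5
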